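/- arXiv:1502.06208 — 4 statements merged into one kernel-verified Lean document; each statement's English description precedes it below -/
import Mathlib

section
/- For every n ∈ ℕ there exists a finite semimetric space Y with |Y| = 2n, doubling constant λ(Y) bounded by a universal constant independent of n, and which contains a subset C of size n whose pairwise distances are all at least rad(Y). Consequently, in semimetric spaces a bounded doubling constant does not imply a packing property. -/
/-!
Take `n` net points `aᵢ` at mutual distance `1` and `n` hubs `bᵢ`, and give every other pair
the distance `2⁻¹ ^ (k + 1)`, where `k` is the smaller of the two indices. The hub `b₀` is
within `1 / 2` of everything, so `rad(Y) ≤ 1` and the `aᵢ` are a `rad(Y)`-net. For doubling,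
let `j` be the least index with `2⁻¹ ^ (j + 1) < r`: a point in an `r`-ball around `x ≠ y`
has index at least `j`; the points of index `j` are covered by themselves, and those of
larger index by the hub `b_{j+1}`, which is within `2⁻¹ ^ (j + 2) < r / 2` of all of them.
The triangle inequality fails badly: `aᵢ` and `aⱼ` are both close to `b₀`.
-/

open Sum Finset

namespace SemimetricNoPacking

noncomputable def scale (k : ℕ) : ℝ := 2⁻¹ ^ (k + 1)

lemma scale_pos (k : ℕ) : 0 < scale k := by unfold scale; positivity

lemma scale_le_one (k : ℕ) : scale k ≤ 1 := pow_le_one₀ (by norm_num) (by norm_num)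

lemma scale_succ (k : ℕ) : scale (k + 1) = scale k / 2 := by
  unfold scale; rw [pow_succ]; ring

lemma exists_scale_lt {r : ℝ} (hr : 0 < r) : ∃ k, scale k < r := by
  obtain ⟨k, hk⟩ := exists_pow_lt_of_lt_one hr (by norm_num : (2⁻¹ : ℝ) < 1)
  exact ⟨k, (pow_le_pow_of_le_one (by norm_num) (by norm_num) k.le_succ).trans_lt hk⟩

variable {n : ℕ}

def level : Fin n ⊕ Fin n → ℕ := Sum.elim Fin.val Fin.val

lemma level_lt (y : Fin n ⊕ Fin n) : level y < n := by
  rcases y with i | i <;> exact i.isLt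

/-- `inl i` is the net point `aᵢ` and `inr i` the hub `bᵢ`. -/
noncomputable def semidist (x y : Fin n ⊕ Fin n) : ℝ :=
  if x = y then 0 else if x.isLeft ∧ y.isLeft then 1 else scale (min (level x) (level y))

lemma semidist_self (x : Fin n ⊕ Fin n) : semidist x x = 0 := if_pos rfl

lemma semidist_comm (x y : Fin n ⊕ Fin n) : semidist x y = semidist y x := by
  simp only [semidist, eq_comm (a := x), and_comm (a := x.isLeft), min_comm (level x)]

lemma semidist_nonneg (x y : Fin n ⊕ Fin n) : 0 ≤ semidist x y := by
  unfold semidist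
  split_ifs
  exacts [le_rfl, zero_le_one, (scale_pos _).le]

lemma semidist_eq_zero_iff (x y : Fin n ⊕ Fin n) : semidist x y = 0 ↔ x = y := by
  unfold semidist
  split_ifs with h
  · exact iff_of_true rfl h
  · exact iff_of_false one_ne_zero h
  · exact iff_of_false (scale_pos _).ne' h

lemma semidist_inl_inl {i j : Fin n} (h : i ≠ j) : semidist (inl i) (inl j) = 1 := by
  simp [semidist, h]

lemma scale_le_semidist {x y : Fin n ⊕ Fin n} (h : x ≠ y) :
    scale (min (level x) (level y)) ≤ semidist x y := by
  rw [semidist, if_neg h]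
  split_ifs
  exacts [scale_le_one _, le_rfl]

lemma semidist_inr_le (i : Fin n) (y : Fin n ⊕ Fin n) :
    semidist (inr i) y ≤ scale (min i (level y)) := by
  unfold semidist
  split_ifs with h h'
  · exact (scale_pos _).le
  · exact absurd h'.1 (by simp)
  · rfl

lemma card_eq : Fintype.card (Fin n ⊕ Fin n) = 2 * n := by
  rw [Fintype.card_sum, Fintype.card_fin, two_mul]

theorem exists_halfBall_cover [NeZero n] (x : Fin n ⊕ Fin n) {r : ℝ} (hr : 0 < r) :
    ∃ t : Finset (Fin n ⊕ Fin n), t.card ≤ 4 ∧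
      {y | semidist x y < r} ⊆ ⋃ c ∈ t, {y | semidist c y < r / 2} := by
  classical
  have hex := exists_scale_lt hr
  set j := Nat.find hex
  -- `Fin.ofNat` wraps around modulo `n`; the hub `b_{j+1}` is only used when `j + 1 < n`.
  refine ⟨{x, inl (Fin.ofNat n j), inr (Fin.ofNat n j), inr (Fin.ofNat n (j + 1))}, card_le_four,
    fun y hy => ?_⟩
  simp only [Set.mem_ofPred_eq, Set.mem_iUnion, exists_prop, mem_insert, mem_singleton] at hy ⊢
  have hr2 : semidist y y < r / 2 := by rw [semidist_self]; exact half_pos hr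
  by_cases hyx : x = y
  · exact ⟨y, .inl hyx.symm, hr2⟩
  have hjy : j ≤ level y :=
    (Nat.find_min' hex ((scale_le_semidist hyx).trans_lt hy)).trans (min_le_right _ _)
  rcases hjy.eq_or_lt with hj | hj
  · refine ⟨y, ?_, hr2⟩
    rcases y with i | i <;> simp [hj, level, Fin.ext_iff]
  · have hj1 : j + 1 < n := Nat.succ_le_of_lt hj |>.trans_lt (level_lt y)
    refine ⟨_, .inr (.inr (.inr rfl)), ?_⟩
    calc semidist (inr (Fin.ofNat n (j + 1))) y ≤ scale (min (j + 1) (level y)) := by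
          simpa [Nat.mod_eq_of_lt hj1] using semidist_inr_le (Fin.ofNat n (j + 1)) y
      _ = scale j / 2 := by rw [min_eq_left hj, scale_succ]
      _ < r / 2 := by linarith [Nat.find_spec hex]

lemma sInf_ball_radii_le {Y : Type*} (d : Y → Y → ℝ) {x : Y} {r : ℝ} (hr : 0 < r)
    (h : ∀ y, d x y < r) : sInf {r : ℝ | 0 < r ∧ ∃ x : Y, ∀ y : Y, d x y < r} ≤ r :=
  csInf_le ⟨0, fun _ hs => hs.1.le⟩ ⟨hr, x, h⟩

lemma rad_le_one [NeZero n] :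
    sInf {r : ℝ | 0 < r ∧ ∃ x : Fin n ⊕ Fin n, ∀ y, semidist x y < r} ≤ 1 := by
  refine sInf_ball_radii_le semidist one_pos (x := inr 0) fun y => ?_
  calc semidist (inr 0) y ≤ scale 0 := by simpa using semidist_inr_le 0 y
    _ < 1 := by norm_num [scale]

end SemimetricNoPacking

open SemimetricNoPacking

/-- There is a universal constant `Λ` such that for every `n ≥ 1` there is a
finite semimetric space `Y` with `|Y| = 2n`, doubling constant at most `Λ`, containing a
subset `C` of size `n` whose pairwise distances are at least `rad(Y)`.  Hence in semimetric
spaces a bounded doubling constant does not imply a packing property. -/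
theorem semimetric_doubling_no_packing :
    ∃ Λ : ℕ, ∀ n : ℕ, 1 ≤ n →
      ∃ (Y : Type) (_ : Fintype Y) (d : Y → Y → ℝ),
        (∀ x y : Y, d x y = d y x) ∧
        (∀ x y : Y, 0 ≤ d x y) ∧
        (∀ x y : Y, d x y = 0 ↔ x = y) ∧
        Fintype.card Y = 2 * n ∧
        -- doubling constant at most Λ
        (∀ (x : Y) (r : ℝ), 0 < r →
          ∃ t : Finset Y, t.card ≤ Λ ∧
            {y : Y | d x y < r} ⊆ ⋃ c ∈ t, {y : Y | d c y < r / 2}) ∧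
        -- a rad(Y)-net of size n, where rad(Y) = sInf {r | 0 < r ∧ ∃ x, ∀ y, d x y < r}
        (∃ C : Finset Y, C.card = n ∧
          ∀ u ∈ C, ∀ v ∈ C, u ≠ v →
            sInf {r : ℝ | 0 < r ∧ ∃ x : Y, ∀ y : Y, d x y < r} ≤ d u v) := by
  refine ⟨4, fun n hn => ?_⟩
  have : NeZero n := ⟨by omega⟩
  refine ⟨Fin n ⊕ Fin n, inferInstance, semidist, semidist_comm, semidist_nonneg,
    semidist_eq_zero_iff, card_eq, fun x _ hr => exists_halfBall_cover x hr,
    univ.map .inl, by simp, ?_⟩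
  simp only [mem_map, mem_univ, true_and, Function.Embedding.inl_apply]
  rintro _ ⟨i, rfl⟩ _ ⟨j, rfl⟩ hij
  rw [semidist_inl_inl (fun h => hij (congrArg inl h))]
  exact rad_le_one
end

section
/- For any semimetric space (X,d), the doubling constant is at most the density constant: λ(X) ≤ μ(X). -/
/-!
Take an `r/2`-separated subset `P` of the ball `B_r(x)` of maximal cardinality; the density
bound guarantees that one exists and that `#P ≤ μ`. A point `y` of the ball not covered by the
balls `B_{r/2}(c)`, `c ∈ P`, would be at distance `≥ r/2` from all of `P` (by symmetry, in
both directions), so `insert y P` would be a larger separated subset. Hence these `#P` balls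
cover `B_r(x)`.
-/

section SeparatedSubset

variable {X : Type*} {d : X → X → ℝ} {ε : ℝ} {S : Set X}

def IsSeparatedSubset (d : X → X → ℝ) (ε : ℝ) (S : Set X) (P : Finset X) : Prop :=
  ↑P ⊆ S ∧ (P : Set X).Pairwise fun u v => ε ≤ d u v

theorem exists_isSeparatedSubset_card_max {μ : ℕ}
    (hμ : ∀ P, IsSeparatedSubset d ε S P → P.card ≤ μ) :
    ∃ P, IsSeparatedSubset d ε S P ∧ ∀ Q, IsSeparatedSubset d ε S Q → Q.card ≤ P.card := by
  have hbdd : BddAbove (Finset.card '' {P | IsSeparatedSubset d ε S P}) := by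
    refine ⟨μ, ?_⟩
    rintro _ ⟨P, hP, rfl⟩
    exact hμ P hP
  have hne : (Finset.card '' {P | IsSeparatedSubset d ε S P}).Nonempty :=
    ⟨0, ∅, ⟨by simp, by simp⟩, rfl⟩
  obtain ⟨_, ⟨P, hP, rfl⟩, hmax⟩ := hbdd.exists_isGreatest_of_nonempty hne
  exact ⟨P, hP, fun Q hQ => hmax ⟨Q, hQ, rfl⟩⟩

theorem IsSeparatedSubset.subset_iUnion_of_card_max [DecidableEq X] {P : Finset X}
    (hsymm : ∀ x y, d x y = d y x) (hdiag : ∀ x, d x x = 0) (hε : 0 < ε)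
    (hP : IsSeparatedSubset d ε S P)
    (hmax : ∀ Q, IsSeparatedSubset d ε S Q → Q.card ≤ P.card) :
    S ⊆ ⋃ c ∈ P, {y | d c y < ε} := by
  intro y hy
  by_contra hnot
  simp only [Set.mem_iUnion, Set.mem_ofPred_eq, not_exists, not_lt] at hnot
  have hyP : y ∉ P := fun hyP => (hnot y hyP).not_gt (hdiag y ▸ hε)
  have hsep : IsSeparatedSubset d ε S (insert y P) := by
    refine ⟨?_, ?_⟩
    · rw [Finset.coe_insert]
      exact Set.insert_subset hy hP.1
    · rw [Finset.coe_insert]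
      exact hP.2.insert fun c hc _ => ⟨hsymm y c ▸ hnot c hc, hnot c hc⟩
  have := hmax _ hsep
  rw [Finset.card_insert_of_notMem hyP] at this
  omega

end SeparatedSubset

theorem doubling_le_density_semimetric_general
    {X : Type*} (d : X → X → ℝ)
    (hsymm : ∀ x y, d x y = d y x)
    (heq : ∀ x y, d x y = 0 ↔ x = y)
    (μ : ℕ)
    (hdens : ∀ (x : X) (r : ℝ), 0 < r → ∀ P : Finset X,
      (∀ p ∈ P, d x p < r) →
      (∀ u ∈ P, ∀ v ∈ P, u ≠ v → r / 2 ≤ d u v) →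
      P.card ≤ μ) :
    ∀ (x : X) (r : ℝ), 0 < r →
      ∃ t : Finset X, t.card ≤ μ ∧
        {y : X | d x y < r} ⊆ ⋃ c ∈ t, {y : X | d c y < r / 2} := by
  classical
  intro x r hr
  have hμ : ∀ P, IsSeparatedSubset d (r / 2) {y | d x y < r} P → P.card ≤ μ :=
    fun P hP => hdens x r hr P hP.1 hP.2
  obtain ⟨P, hP, hmax⟩ := exists_isSeparatedSubset_card_max hμ
  exact ⟨P, hμ P hP,
    hP.subset_iUnion_of_card_max hsymm (fun y => (heq y y).2 rfl) (half_pos hr) hmax⟩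

/-- For any semimetric space, the doubling constant is at most the density
constant: if every `r/2`-separated subset of an open `r`-ball has at most `μ` points,
then every open `r`-ball can be covered by at most `μ` open balls of radius `r/2`. -/
theorem doubling_le_density_semimetric
    {X : Type*} (d : X → X → ℝ)
    (hsymm : ∀ x y, d x y = d y x)
    (hnonneg : ∀ x y, 0 ≤ d x y)
    (heq : ∀ x y, d x y = 0 ↔ x = y)
    (μ : ℕ)
    (hdens : ∀ (x : X) (r : ℝ), 0 < r → ∀ P : Finset X,
      (∀ p ∈ P, d x p < r) →
      (∀ u ∈ P, ∀ v ∈ P, u ≠ v → r / 2 ≤ d u v) →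
      P.card ≤ μ) :
    ∀ (x : X) (r : ℝ), 0 < r →
      ∃ t : Finset X, t.card ≤ μ ∧
        {y : X | d x y < r} ⊆ ⋃ c ∈ t, {y : X | d c y < r / 2} :=
  doubling_le_density_semimetric_general d hsymm heq μ hdens
end

section
/- Margin consistency of nets: let S be a finite labeled sample in a semimetric space with labels y : S → {−1,1}, and suppose the margin of S (minimum distance between oppositely labeled points) is at least γ. If C ⊆ S is a γ-net of S, then for every point x ∈ S, every nearest neighbor of x in C has the same label as x; hence the 1-nearest-neighbor classifier induced by C has zero error on S. -/
theorem label_eq_of_dist_lt_margin {X : Type*} {d : X → X → ℝ} {s : Set X} {y : X → Bool}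
    {γ : ℝ} (hmarg : ∀ a ∈ s, ∀ b ∈ s, y a ≠ y b → γ ≤ d a b) {a b : X} (ha : a ∈ s)
    (hb : b ∈ s) (hab : d a b < γ) : y a = y b :=
  by_contra fun hne => (hmarg a ha b hb hne).not_gt hab

theorem net_margin_consistent_general
    {X : Type*} (d : X → X → ℝ)
    (S : Finset X) (y : X → Bool) (γ : ℝ)
    (hmarg : ∀ a ∈ S, ∀ b ∈ S, y a ≠ y b → γ ≤ d a b)
    (C : Finset X) (hCS : C ⊆ S)
    (hcov : ∀ x ∈ S, ∃ c ∈ C, d x c < γ) :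
    ∀ x ∈ S, ∀ c ∈ C, (∀ c' ∈ C, d x c ≤ d x c') → y c = y x := by
  intro x hx c hc hmin
  obtain ⟨c₀, hc₀, hxc₀⟩ := hcov x hx
  have hxc : d x c < γ := (hmin c₀ hc₀).trans_lt hxc₀
  exact (label_eq_of_dist_lt_margin (s := S) hmarg hx (hCS hc) hxc).symm

/-- margin consistency of nets.  If the labeled sample `S` has margin at least
`γ` (oppositely labeled points are at distance `≥ γ`) and `C ⊆ S` is a `γ`-net of `S`,
then every nearest neighbor in `C` of any `x ∈ S` carries the label of `x`; hence the
`1`-NN classifier induced by `C` makes no error on `S`. -/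
theorem net_margin_consistent
    {X : Type*} (d : X → X → ℝ)
    (hsymm : ∀ x y, d x y = d y x)
    (hnonneg : ∀ x y, 0 ≤ d x y)
    (heq : ∀ x y, d x y = 0 ↔ x = y)
    (S : Finset X) (y : X → Bool) (γ : ℝ) (hγ : 0 < γ)
    (hmarg : ∀ a ∈ S, ∀ b ∈ S, y a ≠ y b → γ ≤ d a b)
    (C : Finset X) (hCS : C ⊆ S)
    (hsep : ∀ u ∈ C, ∀ v ∈ C, u ≠ v → γ ≤ d u v)
    (hcov : ∀ x ∈ S, ∃ c ∈ C, d x c < γ) :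
    ∀ x ∈ S, ∀ c ∈ C, (∀ c' ∈ C, d x c ≤ d x c') → y c = y x :=
  net_margin_consistent_general d S y γ hmarg C hCS hcov
end

section
/- VC-style lower bound ingredient: let P be the distribution on k points {x₁,…,x_k} putting mass 1 − 8ε on x₁ and mass 8ε/(k−1) on each other point, with labels given by a target f : {x₁,…,x_k} → {−1,1} chosen uniformly at random among all 2^k functions. Then for any learning algorithm mapping a sample of n i.i.d. labeled points to a hypothesis h_n, the expected error (over the random target and sample) of h_n is at least (8ε/(k−1)) · (1/2) · E[number of points among x₂,…,x_k not appearing in the sample], and in particular if n ≤ (k−1)/(16ε) then the expected error is Ω(ε). -/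
/-!
At a point `j` missed by the sample, the learner's output does not depend on `f j`. Flipping
`f j` is a bijection preserving the uniform law of `f` that exchanges the events "the guess at
`j` is wrong" and "the guess at `j` is right", so the learner errs at `j` with probability
exactly `1/2`. Every `j ≠ x₀` has mass `p = 8ε/(k-1)`, which gives the first bound. The expected
number of missed points `j ≠ x₀` is `(k-1)(1-p)^n`; if `n ≤ (k-1)/(16ε)` then `np ≤ 1/2`, so
`(1-p)^n ≥ 1/2` by Bernoulli's inequality and the bound is at least `2ε`.
-/

open MeasureTheory Finset

lemma measure_preimage_perm_of_forall_singleton_eq {α : Type*} [MeasurableSpace α]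
    [DiscreteMeasurableSpace α] [Countable α] (μ : Measure α) (hμ : ∀ a b, μ {a} = μ {b})
    (σ : Equiv.Perm α) (s : Set α) : μ (σ ⁻¹' s) = μ s := by
  have hmap : μ.map σ = μ := Measure.ext_iff_singleton.2 fun a => by
    rw [Measure.map_apply .of_discrete .of_discrete, ← Equiv.image_symm_eq_preimage,
      Set.image_singleton, hμ]
  rw [← Measure.map_apply .of_discrete .of_discrete, hmap]

lemma measureReal_setOf_ne_apply_eq_half {α : Type*} [Fintype α] [DecidableEq α]
    (μ : Measure (α → Bool)) [IsProbabilityMeasure μ] (hμ : ∀ f g, μ {f} = μ {g})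
    (h : (α → Bool) → Bool) (j : α) (hh : ∀ f, h (Function.update f j (!f j)) = h f) :
    μ.real {f | h f ≠ f j} = 1 / 2 := by
  have hflip : Function.Involutive fun f : α → Bool => Function.update f j (!f j) := by
    intro f
    simp
  have hpre : hflip.toPerm ⁻¹' {f | h f ≠ f j} = {f | h f ≠ f j}ᶜ := by
    ext f
    simp [hh]
  have hcompl := probReal_compl_eq_one_sub (μ := μ) (.of_discrete (s := {f | h f ≠ f j}))
  rw [← hpre, measureReal_def, measureReal_def,
    measure_preimage_perm_of_forall_singleton_eq μ hμ, ← measureReal_def] at hcompl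
  linarith

lemma integral_card_filter {α β : Type*} [MeasurableSpace β] [DiscreteMeasurableSpace β]
    [Finite β]
    (ν : Measure β) [IsFiniteMeasure ν] (s : Finset α) (R : β → α → Prop)
    [∀ b, DecidablePred (R b)] :
    ∫ b, (#{a ∈ s | R b a} : ℝ) ∂ν = ∑ a ∈ s, ν.real {b | R b a} := by
  simp_rw [← integral_indicator_one (μ := ν) (MeasurableSet.of_discrete),
    ← integral_finsetSum s (fun _ _ => Integrable.of_finite)]
  congr with b
  simp [Set.indicator_apply]

lemma mul_card_le_measureReal {α : Type*} [MeasurableSpace α] [MeasurableSingletonClass α]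
    (μ : Measure α) [IsFiniteMeasure μ] {p : ℝ} {s : Finset α} (hs : ∀ a ∈ s, p ≤ μ.real {a}) :
    p * #s ≤ μ.real s := by
  rw [← sum_measureReal_singleton, mul_comm, ← nsmul_eq_mul]
  exact card_nsmul_le_sum s _ p hs

lemma measureReal_pi_forall_ne {ι α : Type*} [Fintype ι] [MeasurableSpace α]
    [MeasurableSingletonClass α] (μ : Measure α) [IsProbabilityMeasure μ] (j : α) :
    (Measure.pi fun _ : ι => μ).real {x | ∀ i, x i ≠ j} = (1 - μ.real {j}) ^ Fintype.card ι := by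
  have hbox : {x : ι → α | ∀ i, x i ≠ j} = Set.univ.pi fun _ => {j}ᶜ := by
    ext x
    simp
  rw [hbox, measureReal_def, Measure.pi_pi, ENNReal.toReal_prod, prod_const, card_univ,
    ← measureReal_def, probReal_compl_eq_one_sub (measurableSet_singleton j)]

lemma integral_card_unseen {n : ℕ} {α : Type*} [Fintype α] [DecidableEq α]
    [MeasurableSpace α] [DiscreteMeasurableSpace α] (μ : Measure α) [IsProbabilityMeasure μ]
    (x0 : α) {p : ℝ} (hp : ∀ j, j ≠ x0 → μ.real {j} = p) :
    ∫ x, (#{j | j ≠ x0 ∧ ∀ i : Fin n, x i ≠ j} : ℝ) ∂(Measure.pi fun _ => μ) =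
      ((Fintype.card α : ℝ) - 1) * (1 - p) ^ n := by
  simp_rw [← filter_filter]
  rw [integral_card_filter, sum_congr rfl fun j hj => by
      rw [measureReal_pi_forall_ne, hp j (mem_filter.1 hj).2, Fintype.card_fin],
    sum_const, filter_ne', card_erase_of_mem (mem_univ x0), card_univ, nsmul_eq_mul,
    Nat.cast_pred (Fintype.card_pos_iff.2 ⟨x0⟩)]

lemma le_integral_error_given_sample {ι α : Type*} [Fintype α] [DecidableEq α] [MeasurableSpace α]
    [MeasurableSingletonClass α] (μP : Measure α) [IsFiniteMeasure μP]
    (μf : Measure (α → Bool)) [IsProbabilityMeasure μf] (hμf : ∀ f g, μf {f} = μf {g})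
    (A : (ι → α × Bool) → α → Bool) (x : ι → α) (U : Finset α) (hU : ∀ j ∈ U, ∀ i, x i ≠ j)
    {p : ℝ} (hpU : ∀ j ∈ U, p ≤ μP.real {j}) :
    p * (1 / 2) * #U ≤ ∫ f, μP.real {j | A (fun i => (x i, f (x i))) j ≠ f j} ∂μf := by
  have hguess : ∀ j ∈ U, μf.real {f | A (fun i => (x i, f (x i))) j ≠ f j} = 1 / 2 := by
    intro j hj
    refine measureReal_setOf_ne_apply_eq_half μf hμf _ j fun f => ?_
    simp only [Function.update_of_ne (hU j hj _)]
  calc p * (1 / 2) * #U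
      = ∫ f, p * #{j ∈ U | A (fun i => (x i, f (x i))) j ≠ f j} ∂μf := by
        rw [integral_const_mul, integral_card_filter, sum_congr rfl hguess, sum_const,
          nsmul_eq_mul]
        ring
    _ ≤ ∫ f, μP.real {j | A (fun i => (x i, f (x i))) j ≠ f j} ∂μf := by
        refine integral_mono .of_finite .of_finite fun f => ?_
        refine (mul_card_le_measureReal μP fun j hj => hpU j (mem_filter.1 hj).1).trans ?_
        exact measureReal_mono fun j hj => (mem_filter.1 hj).2

theorem le_integral_error {ι α : Type*} [Fintype ι] [Fintype α] [DecidableEq α]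
    [MeasurableSpace α] [DiscreteMeasurableSpace α] (μP : Measure α) [IsFiniteMeasure μP]
    (μf : Measure (α → Bool)) [IsProbabilityMeasure μf] (hμf : ∀ f g, μf {f} = μf {g})
    (A : (ι → α × Bool) → α → Bool) {p : ℝ} (U : (ι → α) → Finset α)
    (hU : ∀ x, ∀ j ∈ U x, (∀ i, x i ≠ j) ∧ p ≤ μP.real {j}) :
    p * (1 / 2) * ∫ ω, (#(U ω.1) : ℝ) ∂((Measure.pi fun _ : ι => μP).prod μf) ≤
      ∫ ω, μP.real {j | A (fun i => (ω.1 i, ω.2 (ω.1 i))) j ≠ ω.2 j}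
        ∂((Measure.pi fun _ : ι => μP).prod μf) := by
  rw [integral_prod _ .of_finite, integral_prod _ .of_finite, ← integral_const_mul]
  simp only [integral_const, probReal_univ, one_smul]
  refine integral_mono .of_finite .of_finite fun x => ?_
  exact le_integral_error_given_sample μP μf hμf A x _ (fun j hj => (hU x j hj).1)
    fun j hj => (hU x j hj).2

theorem vc_lower_bound_ingredient_general
    (k n : ℕ) (hk : 2 ≤ k) (ε : ℝ) (hε0 : 0 < ε) (hε8 : ε < 1 / 8)
    (x0 : Fin k)
    (μP : Measure (Fin k)) [IsProbabilityMeasure μP]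
    (hμj : ∀ j : Fin k, j ≠ x0 → μP {j} = ENNReal.ofReal (8 * ε / ((k : ℝ) - 1)))
    (μf : Measure (Fin k → Bool)) [IsProbabilityMeasure μf]
    (hμf : ∀ f : Fin k → Bool, μf {f} = ENNReal.ofReal ((1 : ℝ) / 2 ^ k))
    (A : (Fin n → Fin k × Bool) → (Fin k → Bool)) :
    ((8 * ε / ((k : ℝ) - 1)) * (1 / 2) *
        ∫ ω, ((Finset.univ.filter fun j : Fin k =>
            j ≠ x0 ∧ ∀ i : Fin n, ω.1 i ≠ j).card : ℝ)
          ∂((Measure.pi fun _ : Fin n => μP).prod μf) ≤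
      ∫ ω, (μP {j : Fin k |
            A (fun i => (ω.1 i, ω.2 (ω.1 i))) j ≠ ω.2 j}).toReal
          ∂((Measure.pi fun _ : Fin n => μP).prod μf)) ∧
    ((n : ℝ) ≤ ((k : ℝ) - 1) / (16 * ε) →
      2 * ε ≤
        ∫ ω, (μP {j : Fin k |
            A (fun i => (ω.1 i, ω.2 (ω.1 i))) j ≠ ω.2 j}).toReal
          ∂((Measure.pi fun _ : Fin n => μP).prod μf)) := by
  have hk1 : (1 : ℝ) ≤ k - 1 := by
    have : (2 : ℝ) ≤ k := by exact_mod_cast hk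
    linarith
  set p := 8 * ε / ((k : ℝ) - 1) with hp_def
  have hmass : ∀ j, j ≠ x0 → μP.real {j} = p := fun j hj => by
    rw [measureReal_def, hμj j hj, ENNReal.toReal_ofReal (by positivity)]
  have herr := le_integral_error μP μf (fun f g => by rw [hμf, hμf]) A
    (fun x => {j | j ≠ x0 ∧ ∀ i : Fin n, x i ≠ j})
    fun x j hj => ⟨(mem_filter.1 hj).2.2, (hmass j (mem_filter.1 hj).2.1).ge⟩
  simp only [← measureReal_def]
  refine ⟨herr, fun hn => ?_⟩
  rw [integral_prod _ .of_finite] at herr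
  simp only [integral_const, probReal_univ, one_smul] at herr
  rw [integral_card_unseen μP x0 hmass, Fintype.card_fin] at herr
  have hnp : n * p ≤ 1 / 2 := by
    calc n * p ≤ (k - 1) / (16 * ε) * p := by gcongr
      _ = 1 / 2 := by rw [hp_def]; field_simp; ring
  have hp1 : p ≤ 1 := (div_le_self (by positivity) hk1).trans (by linarith)
  have hpow : 1 / 2 ≤ (1 - p) ^ n := by
    have := one_add_mul_le_pow (a := -p) (by linarith) n
    rw [← sub_eq_add_neg] at this
    linarith
  calc 2 * ε ≤ 4 * ε * (1 - p) ^ n := by nlinarith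
    _ = p * (1 / 2) * ((k - 1) * (1 - p) ^ n) := by rw [hp_def]; field_simp; ring
    _ ≤ _ := herr

/-- VC-style lower bound ingredient.  Let `μP` put mass `1 − 8ε` on a point
`x₀` of a `k`-point domain and mass `8ε/(k−1)` on each other point, and let the target
`f : Fin k → Bool` be uniform among all `2^k` labelings, independent of the i.i.d. inputs.
Then for any learning algorithm `A` mapping the labeled sample to a hypothesis, the
expected error is at least `(8ε/(k−1))·(1/2)·E[#unseen points ≠ x₀]`; in particular, if
`n ≤ (k−1)/(16ε)` then the expected error is at least `2ε` (i.e. `Ω(ε)`). -/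
theorem vc_lower_bound_ingredient
    (k n : ℕ) (hk : 2 ≤ k) (ε : ℝ) (hε0 : 0 < ε) (hε8 : ε < 1 / 8)
    (x0 : Fin k)
    (μP : Measure (Fin k)) [IsProbabilityMeasure μP]
    (hμ0 : μP {x0} = ENNReal.ofReal (1 - 8 * ε))
    (hμj : ∀ j : Fin k, j ≠ x0 → μP {j} = ENNReal.ofReal (8 * ε / ((k : ℝ) - 1)))
    (μf : Measure (Fin k → Bool)) [IsProbabilityMeasure μf]
    (hμf : ∀ f : Fin k → Bool, μf {f} = ENNReal.ofReal ((1 : ℝ) / 2 ^ k))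
    (A : (Fin n → Fin k × Bool) → (Fin k → Bool)) :
    ((8 * ε / ((k : ℝ) - 1)) * (1 / 2) *
        ∫ ω, ((Finset.univ.filter fun j : Fin k =>
            j ≠ x0 ∧ ∀ i : Fin n, ω.1 i ≠ j).card : ℝ)
          ∂((Measure.pi fun _ : Fin n => μP).prod μf) ≤
      ∫ ω, (μP {j : Fin k |
            A (fun i => (ω.1 i, ω.2 (ω.1 i))) j ≠ ω.2 j}).toReal
          ∂((Measure.pi fun _ : Fin n => μP).prod μf)) ∧
    ((n : ℝ) ≤ ((k : ℝ) - 1) / (16 * ε) →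
      2 * ε ≤
        ∫ ω, (μP {j : Fin k |
            A (fun i => (ω.1 i, ω.2 (ω.1 i))) j ≠ ω.2 j}).toReal
          ∂((Measure.pi fun _ : Fin n => μP).prod μf)) :=
  vc_lower_bound_ingredient_general k n hk ε hε0 hε8 x0 μP hμj μf hμf A
end
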